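/- arXiv:2006.12287 — 2 statements merged into one kernel-verified Lean document; each statement's English description precedes it below -/
import Mathlib

section
/- Let X, X' be i.i.d. uniform on the unit square [0,1]^2 with supremum-norm distance d, and for x ∈ [0,1]^2 let F_x(t) = P(d(x,X') ≤ t). Then for 0 ≤ t' ≤ t ≤ 1/2, the quantity Γ_1(t,t') := ∫ F_x(t) F_x(t') dμ(x) equals ((-1/3)t'^3 - t'^2 t - 2 t' t^2 + 4 t' t)^2. -/
/-
Since the sup-norm ball is a box, `F_x(t)` factors as `ℓ_t(x₀) ℓ_t(x₁)`, where
`ℓ_t(u) = |[u - t, u + t] ∩ [0, 1]|` (`clippedLength t u`). By Fubini, `Γ₁(t, t')` is the square of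
`∫₀¹ ℓ_t ℓ_{t'}`. The profile `ℓ_t` is symmetric about `1/2` and equals `t + min u t` on `[0, 1/2]`,
so this integral is twice an integral of a piecewise polynomial with breakpoints `t'` and `t`.
-/

open MeasureTheory

/-- The uniform distribution on the unit square `[0,1]^2 ⊆ ℝ²`
(with `Fin 2 → ℝ` carrying the supremum norm). -/
noncomputable def unifSquare : Measure (Fin 2 → ℝ) :=
  volume.restrict (Set.Icc (0 : Fin 2 → ℝ) 1)

open Set Metric intervalIntegral

noncomputable def clippedLength (s u : ℝ) : ℝ := volume.real (closedBall u s ∩ Icc 0 1)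

theorem measureReal_closedBall_inter_Icc_pi {ι : Type*} [Fintype ι] (x : ι → ℝ) {s : ℝ}
    (hs : 0 ≤ s) :
    volume.real (closedBall x s ∩ Icc 0 1) = ∏ i, clippedLength s (x i) := by
  rw [closedBall_pi x hs, ← pi_univ_Icc, ← pi_inter_distrib, measureReal_def, volume_pi,
    Measure.pi_pi, ENNReal.toReal_prod]
  rfl

theorem clippedLength_eq (s u : ℝ) :
    clippedLength s u = max (min (u + s) 1 - max (u - s) 0) 0 := by
  rw [clippedLength, Real.closedBall_eq_Icc, Icc_inter_Icc, measureReal_def, Real.volume_Icc,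
    ENNReal.toReal_ofReal']

theorem continuous_clippedLength (s : ℝ) : Continuous (clippedLength s) := by
  rw [funext (clippedLength_eq s)]
  fun_prop

theorem clippedLength_one_sub (s u : ℝ) : clippedLength s (1 - u) = clippedLength s u := by
  rw [clippedLength_eq, clippedLength_eq]
  congr 1
  rw [min_def, min_def, max_def, max_def]
  split_ifs <;> linarith

theorem clippedLength_of_le_half {s u : ℝ} (hs : 0 ≤ s) (hs' : s ≤ 1 / 2) (hu : 0 ≤ u)
    (hu' : u ≤ 1 / 2) : clippedLength s u = s + min u s := by
  rw [clippedLength_eq, min_eq_left (by linarith), min_def, max_def, max_def]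
  split_ifs <;> linarith

theorem setIntegral_Icc_pi_prod_eq_pow {ι : Type*} [Fintype ι] (f : ℝ → ℝ) :
    ∫ x in Icc (0 : ι → ℝ) 1, ∏ i, f (x i) = (∫ u in Icc (0 : ℝ) 1, f u) ^ Fintype.card ι := by
  rw [← pi_univ_Icc, volume_pi, Measure.restrict_pi_pi]
  exact integral_fintype_prod_eq_pow (μ := volume.restrict (Icc 0 1)) f

theorem integral_quadratic (a b p q r : ℝ) :
    ∫ u in a..b, (p + q * u + r * u ^ 2)
      = p * (b - a) + q * (b ^ 2 - a ^ 2) / 2 + r * (b ^ 3 - a ^ 3) / 3 := by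
  rw [intervalIntegral.integral_add ((by fun_prop : Continuous _).intervalIntegrable _ _)
      ((by fun_prop : Continuous _).intervalIntegrable _ _),
    intervalIntegral.integral_add intervalIntegrable_const
      ((by fun_prop : Continuous _).intervalIntegrable _ _),
    intervalIntegral.integral_const, intervalIntegral.integral_const_mul,
    intervalIntegral.integral_const_mul, integral_id, integral_pow, smul_eq_mul]
  ring

theorem integral_add_min_mul_add_min {t t' : ℝ} (h0 : 0 ≤ t') (h1 : t' ≤ t) (h2 : t ≤ 1 / 2) :
    ∫ u in (0 : ℝ)..1 / 2, (t + min u t) * (t' + min u t')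
      = -(1 / 6) * t' ^ 3 - t' ^ 2 * t / 2 - t' * t ^ 2 + 2 * t' * t := by
  have hc : Continuous fun u : ℝ => (t + min u t) * (t' + min u t') := by fun_prop
  have below : ∫ u in (0 : ℝ)..t', (t + min u t) * (t' + min u t')
      = ∫ u in (0 : ℝ)..t', (t * t' + (t + t') * u + 1 * u ^ 2) := by
    refine integral_congr fun u hu => ?_
    rw [uIcc_of_le h0] at hu
    simp only [min_eq_left hu.2, min_eq_left (hu.2.trans h1)]
    ring
  have between : ∫ u in t'..t, (t + min u t) * (t' + min u t')
      = ∫ u in t'..t, (2 * t * t' + 2 * t' * u + 0 * u ^ 2) := by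
    refine integral_congr fun u hu => ?_
    rw [uIcc_of_le h1] at hu
    simp only [min_eq_left hu.2, min_eq_right hu.1]
    ring
  have above : ∫ u in t..1 / 2, (t + min u t) * (t' + min u t')
      = ∫ u in t..1 / 2, (4 * t * t' + 0 * u + 0 * u ^ 2) := by
    refine integral_congr fun u hu => ?_
    rw [uIcc_of_le h2] at hu
    simp only [min_eq_right hu.1, min_eq_right (h1.trans hu.1)]
    ring
  rw [← integral_add_adjacent_intervals (hc.intervalIntegrable 0 t') (hc.intervalIntegrable _ _),
    ← integral_add_adjacent_intervals (hc.intervalIntegrable t' t) (hc.intervalIntegrable _ _),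
    below, between, above, integral_quadratic, integral_quadratic, integral_quadratic]
  ring

theorem setIntegral_clippedLength_mul {t t' : ℝ} (h0 : 0 ≤ t') (h1 : t' ≤ t) (h2 : t ≤ 1 / 2) :
    ∫ u in Icc (0 : ℝ) 1, clippedLength t u * clippedLength t' u
      = -(1 / 3) * t' ^ 3 - t' ^ 2 * t - 2 * t' * t ^ 2 + 4 * t' * t := by
  set g : ℝ → ℝ := fun u => clippedLength t u * clippedLength t' u
  have hc : Continuous g := (continuous_clippedLength t).mul (continuous_clippedLength t')
  have hreflect : ∫ u in (1 / 2 : ℝ)..1, g u = ∫ u in (0 : ℝ)..1 / 2, g u :=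
    calc ∫ u in (1 / 2 : ℝ)..1, g u = ∫ u in (1 - 1 / 2 : ℝ)..(1 - 0), g u := by norm_num
      _ = ∫ u in (0 : ℝ)..1 / 2, g (1 - u) := (integral_comp_sub_left g 1).symm
      _ = ∫ u in (0 : ℝ)..1 / 2, g u := by simp only [g, clippedLength_one_sub]
  have hhalf : ∫ u in (0 : ℝ)..1 / 2, g u
      = ∫ u in (0 : ℝ)..1 / 2, (t + min u t) * (t' + min u t') := by
    refine integral_congr fun u hu => ?_
    rw [uIcc_of_le (by norm_num)] at hu
    dsimp only [g]
    rw [clippedLength_of_le_half (h0.trans h1) h2 hu.1 hu.2,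
      clippedLength_of_le_half h0 (h1.trans h2) hu.1 hu.2]
  rw [integral_Icc_eq_integral_Ioc, ← integral_of_le zero_le_one,
    ← integral_add_adjacent_intervals (hc.intervalIntegrable 0 (1 / 2)) (hc.intervalIntegrable _ 1),
    hreflect, hhalf, integral_add_min_mul_add_min h0 h1 h2]
  ring

theorem unifSquare_setOf_dist_le_toReal (x : Fin 2 → ℝ) {s : ℝ} (hs : 0 ≤ s) :
    (unifSquare {y | dist x y ≤ s}).toReal = ∏ i, clippedLength s (x i) := by
  have hball : {y | dist x y ≤ s} = closedBall x s := by
    ext y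
    exact mem_closedBall'.symm
  rw [unifSquare, Measure.restrict_apply' measurableSet_Icc, hball, ← measureReal_def,
    measureReal_closedBall_inter_Icc_pi x hs]

/-- For the unit square with the supremum-norm distance and `F_x(t) = P(d(x,X') ≤ t)`:
for `0 ≤ t' ≤ t ≤ 1/2`,
`Γ₁(t,t') = ∫ F_x(t) F_x(t') dμ(x) = (-t'³/3 - t'² t - 2 t' t² + 4 t' t)²`. -/
theorem stmt15 (t t' : ℝ) (h0 : 0 ≤ t') (h1 : t' ≤ t) (h2 : t ≤ 1 / 2) :
    ∫ x, (unifSquare {y | dist x y ≤ t}).toReal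
        * (unifSquare {y | dist x y ≤ t'}).toReal ∂unifSquare
      = (-(1 / 3) * t' ^ 3 - t' ^ 2 * t - 2 * t' * t ^ 2 + 4 * t' * t) ^ 2 := by
  simp_rw [unifSquare_setOf_dist_le_toReal _ (h0.trans h1), unifSquare_setOf_dist_le_toReal _ h0,
    ← Finset.prod_mul_distrib]
  rw [unifSquare, setIntegral_Icc_pi_prod_eq_pow fun u => clippedLength t u * clippedLength t' u,
    setIntegral_clippedLength_mul h0 h1 h2, Fintype.card_fin]
end

section
/- Let F : [a,b] → [0,1] be a distribution function of a measure on (a,b], continuously differentiable with derivative f strictly positive on (a,b) (possibly f(a) = 0 or f(b) = 0). Let h_n → h uniformly in D[a,b] with h continuous, t_n → 0 with t_n ≠ 0, and F + t_n h_n a distribution function of a measure on (a,b] for all n. Then the quotient ((F + t_n h_n)^{-1} − F^{-1})/t_n converges in L^1(0,1) to −(h/f) ∘ F^{-1}, i.e., the inversion map F ↦ F^{-1} is Hadamard differentiable at F tangentially to C[a,b] as a map into L^1(0,1), with derivative h ↦ −(h/f) ∘ F^{-1}. -/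
/-!
Write `Q_G` for the quantile function of `G` and `Gₙ = F + tₙ hₙ`. If a continuous `φ` is
`δ`-close to `G` on `[a, b]`, then `φ (Q_G s)` is `δ`-close to `s`. With `φ = F` this traps
`Q_{Gₙ} s` between `Q_F (s ∓ |tₙ| C)`; with `φ = F + tₙ h` it gives
`F (Q_{Gₙ} s) = s - tₙ h (Q_{Gₙ} s) + o(tₙ)`, and the mean value theorem turns this into
pointwise convergence of the difference quotients to `-(h / f) ∘ Q_F` on `(0, 1)`.

For L¹ convergence, the trap bounds the quotients by `C / m` on `[η, 1 - η]`, where `f ≥ m > 0`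
on the relevant compact piece of `(a, b)`; and, integrated over `(0, η)` and `(1 - η, 1)`, by
`2 C (Q_F (2η) - a + b - Q_F (1 - 2η))`, which is small uniformly in `n` because `Q_F` is
continuous. Dominated convergence on `[η, 1 - η]` finishes the proof; the split is needed because
`f` may vanish at `a` or `b`.
-/

open MeasureTheory Filter Set Topology

/-- The level is capped at `1`, so that `quantile a b G` is monotone on all of `ℝ` as soon as
`1 ≤ G b` (for `s > 1` the set would be empty, with junk infimum `0`); at levels `s ≤ 1` this
is the usual `sInf {x ∈ [a, b] | s ≤ G x}`. -/
noncomputable def quantile (a b : ℝ) (G : ℝ → ℝ) (s : ℝ) : ℝ :=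
  sInf {x | x ∈ Icc a b ∧ min 1 s ≤ G x}

section Quantile

variable {a b s : ℝ} {G : ℝ → ℝ}

theorem quantile_le {x : ℝ} (hx : x ∈ Icc a b) (hsx : min 1 s ≤ G x) : quantile a b G s ≤ x :=
  csInf_le ⟨a, fun _ hy => hy.1.1⟩ ⟨hx, hsx⟩

theorem apply_lt_of_lt_quantile {y : ℝ} (hy : y ∈ Icc a b) (hlt : y < quantile a b G s) :
    G y < min 1 s :=
  lt_of_not_ge fun hle => (quantile_le hy hle).not_gt hlt

theorem quantile_mem_Icc (hab : a ≤ b) (hGb : 1 ≤ G b) : quantile a b G s ∈ Icc a b :=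
  ⟨le_csInf ⟨b, ⟨hab, le_rfl⟩, (min_le_left _ _).trans hGb⟩ fun _ hx => hx.1.1,
    quantile_le ⟨hab, le_rfl⟩ ((min_le_left _ _).trans hGb)⟩

theorem monotone_quantile (hab : a ≤ b) (hGb : 1 ≤ G b) : Monotone (quantile a b G) :=
  fun _ _ huv => csInf_le_csInf ⟨a, fun _ hx => hx.1.1⟩
    ⟨b, ⟨hab, le_rfl⟩, (min_le_left _ _).trans hGb⟩
    fun _ hx => ⟨hx.1, (min_le_min_left 1 huv).trans hx.2⟩

theorem le_apply_quantile (hab : a ≤ b) (hGb : 1 ≤ G b)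
    (hG : ∀ x ∈ Ico a b, ContinuousWithinAt G (Ici x) x) :
    min 1 s ≤ G (quantile a b G s) := by
  set q := quantile a b G s
  have hq : q ∈ Icc a b := quantile_mem_Icc hab hGb
  rcases hq.2.eq_or_lt with hqb | hqb
  · rw [hqb]; exact (min_le_left _ _).trans hGb
  by_contra! hlt
  obtain ⟨u, hqu, hu⟩ := mem_nhdsGE_iff_exists_Ico_subset.1
    ((hG q ⟨hq.1, hqb⟩).eventually_lt_const hlt)
  have : u ≤ q := le_csInf ⟨b, ⟨hab, le_rfl⟩, (min_le_left _ _).trans hGb⟩ fun x hx =>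
    le_of_not_gt fun hxu => (hu ⟨quantile_le hx.1 hx.2, hxu⟩).not_ge hx.2
  exact this.not_gt hqu

/-- From below because `s ≤ G` at the quantile; from above by left continuity of `φ`, since
`G < s` to its left. -/
theorem abs_apply_quantile_sub_le (hab : a ≤ b) (hGa : G a < s) (hs : s ≤ 1) (hGb : 1 ≤ G b)
    (hG : ∀ x ∈ Ico a b, ContinuousWithinAt G (Ici x) x) {φ : ℝ → ℝ}
    (hφ : ContinuousOn φ (Icc a b)) {δ : ℝ} (hGφ : ∀ x ∈ Icc a b, |G x - φ x| ≤ δ) :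
    |φ (quantile a b G s) - s| ≤ δ := by
  set q := quantile a b G s
  have hq : q ∈ Icc a b := quantile_mem_Icc hab hGb
  have hsq : s ≤ G q := min_eq_right hs ▸ le_apply_quantile hab hGb hG
  have haq : a < q := hq.1.lt_of_ne fun h => (h ▸ hGa).not_ge hsq
  have hIco : Ico a q ⊆ Icc a b := Ico_subset_Icc_self.trans (Icc_subset_Icc_right hq.2)
  have hup : φ q ≤ s + δ := by
    refine ContinuousWithinAt.closure_le (by simp [closure_Ico haq.ne, haq.le])
      ((hφ q hq).mono hIco) continuousWithinAt_const fun y hy => ?_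
    have := apply_lt_of_lt_quantile (hIco hy) hy.2
    rw [min_eq_right hs] at this
    linarith [(abs_le.1 (hGφ y (hIco hy))).1]
  rw [abs_le]
  constructor <;> linarith [(abs_le.1 (hGφ q hq)).2]

end Quantile

section StrictMono

variable {a b s : ℝ} {F : ℝ → ℝ}

theorem quantile_apply (hFs : StrictMonoOn F (Icc a b)) (hFb : F b = 1) {x : ℝ}
    (hx : x ∈ Icc a b) : quantile a b F (F x) = x := by
  have hx1 : min 1 (F x) = F x :=
    min_eq_right (hFb ▸ hFs.monotoneOn hx ⟨hx.1.trans hx.2, le_rfl⟩ hx.2)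
  refine le_antisymm (quantile_le hx hx1.le) (le_csInf ⟨x, hx, hx1.le⟩ fun y hy => ?_)
  exact (hFs.le_iff_le hx hy.1).1 (hx1 ▸ hy.2)

theorem apply_quantile (hab : a ≤ b) (hFc : ContinuousOn F (Icc a b))
    (hFs : StrictMonoOn F (Icc a b)) (hFa : F a = 0) (hFb : F b = 1) (hs : s ∈ Icc 0 1) :
    F (quantile a b F s) = s := by
  obtain ⟨x, hx, rfl⟩ := intermediate_value_Icc hab hFc (hFa ▸ hFb ▸ hs)
  rw [quantile_apply hFs hFb hx]

theorem quantile_of_nonpos (hab : a ≤ b) (hFs : StrictMonoOn F (Icc a b)) (hFa : F a = 0)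
    (hFb : F b = 1) (hs : s ≤ 0) : quantile a b F s = a := by
  refine le_antisymm ?_ (quantile_mem_Icc hab hFb.ge).1
  calc quantile a b F s ≤ quantile a b F (F a) := monotone_quantile hab hFb.ge (hFa ▸ hs)
    _ = a := quantile_apply hFs hFb (left_mem_Icc.2 hab)

theorem quantile_of_one_le (hab : a ≤ b) (hFs : StrictMonoOn F (Icc a b)) (hFb : F b = 1)
    (hs : 1 ≤ s) : quantile a b F s = b := by
  have : quantile a b F s = quantile a b F (F b) := by
    simp only [quantile, hFb, min_eq_left hs, min_self]
  rw [this, quantile_apply hFs hFb (right_mem_Icc.2 hab)]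

theorem quantile_mem_Ioo (hab : a ≤ b) (hFc : ContinuousOn F (Icc a b))
    (hFs : StrictMonoOn F (Icc a b)) (hFa : F a = 0) (hFb : F b = 1) (hs : s ∈ Ioo 0 1) :
    quantile a b F s ∈ Ioo a b := by
  have hFq := apply_quantile hab hFc hFs hFa hFb (Ioo_subset_Icc_self hs)
  obtain ⟨hqa, hqb⟩ := quantile_mem_Icc (s := s) hab hFb.ge
  refine ⟨hqa.lt_of_ne fun h => ?_, hqb.lt_of_ne fun h => ?_⟩
  · rw [← h, hFa] at hFq; exact hs.1.ne hFq
  · rw [h, hFb] at hFq; exact hs.2.ne' hFq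

theorem continuous_quantile (hab : a ≤ b) (hFs : StrictMonoOn F (Icc a b)) (hFb : F b = 1) :
    Continuous (quantile a b F) := by
  let Q : ℝ → Icc a b := fun u => ⟨quantile a b F u, quantile_mem_Icc hab hFb.ge⟩
  have hQ : Continuous Q := Monotone.continuous_of_surjective
    (fun _ _ h => monotone_quantile hab hFb.ge h)
    fun x => ⟨F x, Subtype.ext (quantile_apply hFs hFb x.2)⟩
  exact continuous_subtype_val.comp hQ

theorem mem_Icc_quantile_of_abs_sub_le (hab : a ≤ b) (hFs : StrictMonoOn F (Icc a b))
    (hFb : F b = 1) {x δ : ℝ} (hx : x ∈ Icc a b) (hxs : |F x - s| ≤ δ) :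
    x ∈ Icc (quantile a b F (s - δ)) (quantile a b F (s + δ)) := by
  have hmono := monotone_quantile hab hFb.ge
  rw [← quantile_apply hFs hFb hx]
  constructor <;> apply hmono <;> linarith [abs_le.1 hxs]

end StrictMono

section Calculus

variable {a b : ℝ} {F f : ℝ → ℝ}

theorem exists_mem_uIcc_sub_eq_mul (hF : ∀ x ∈ Icc a b, HasDerivWithinAt F (f x) (Icc a b) x)
    {x y : ℝ} (hx : x ∈ Icc a b) (hy : y ∈ Icc a b) :
    ∃ ξ ∈ uIcc x y, F y - F x = f ξ * (y - x) := by
  wlog hxy : x < y generalizing x y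
  · rcases (not_lt.1 hxy).eq_or_lt with rfl | hyx
    · exact ⟨y, left_mem_uIcc, by ring⟩
    obtain ⟨ξ, hξ, h⟩ := this hy hx hyx
    exact ⟨ξ, uIcc_comm x y ▸ hξ, by linarith⟩
  have hsub : Icc x y ⊆ Icc a b := Icc_subset_Icc hx.1 hy.2
  obtain ⟨ξ, hξ, h⟩ := exists_hasDerivAt_eq_slope F f hxy
    (fun z hz => (hF z (hsub hz)).continuousWithinAt.mono hsub) fun z hz =>
      (hF z (hsub (Ioo_subset_Icc_self hz))).hasDerivAt
        (Icc_mem_nhds (hx.1.trans_lt hz.1) (hz.2.trans_le hy.2))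
  refine ⟨ξ, uIcc_of_le hxy.le ▸ Ioo_subset_Icc_self hξ, ?_⟩
  rw [h, div_mul_cancel₀ _ (sub_ne_zero.2 hxy.ne')]

theorem mul_abs_sub_le_abs_apply_sub
    (hF : ∀ x ∈ Icc a b, HasDerivWithinAt F (f x) (Icc a b) x) {x y : ℝ} (hx : x ∈ Icc a b)
    (hy : y ∈ Icc a b) {m : ℝ} (hm0 : 0 ≤ m) (hm : ∀ z ∈ uIcc x y, m ≤ f z) :
    m * |y - x| ≤ |F y - F x| := by
  obtain ⟨ξ, hξ, he⟩ := exists_mem_uIcc_sub_eq_mul hF hx hy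
  rw [he, abs_mul, abs_of_nonneg (hm0.trans (hm ξ hξ))]
  exact mul_le_mul_of_nonneg_right (hm ξ hξ) (abs_nonneg _)

/-- By the mean value theorem the two quotients differ by a factor `f ξₙ → f x`. -/
theorem tendsto_sub_div_of_tendsto_apply_sub_div
    (hF : ∀ x ∈ Icc a b, HasDerivWithinAt F (f x) (Icc a b) x) {x : ℝ} (hx : x ∈ Icc a b)
    (hfx : ContinuousWithinAt f (Icc a b) x) (hfx0 : f x ≠ 0) {q t : ℕ → ℝ}
    (hq : ∀ n, q n ∈ Icc a b) (hqx : Tendsto q atTop (𝓝 x)) {L : ℝ}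
    (hL : Tendsto (fun n => (F (q n) - F x) / t n) atTop (𝓝 L)) :
    Tendsto (fun n => (q n - x) / t n) atTop (𝓝 (L / f x)) := by
  choose ξ hξ hFξ using fun n => exists_mem_uIcc_sub_eq_mul hF hx (hq n)
  have hξx : Tendsto ξ atTop (𝓝 x) := by
    refine tendsto_iff_norm_sub_tendsto_zero.2 (squeeze_zero (fun _ => norm_nonneg _)
      (fun n => abs_sub_left_of_mem_uIcc (hξ n)) ?_)
    simpa using (hqx.sub_const x).abs
  have hfξ : Tendsto (fun n => f (ξ n)) atTop (𝓝 (f x)) :=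
    hfx.tendsto.comp (tendsto_nhdsWithin_iff.2
      ⟨hξx, Eventually.of_forall fun n => uIcc_subset_Icc hx (hq n) (hξ n)⟩)
  refine (hL.div hfξ hfx0).congr' ?_
  filter_upwards [hfξ.eventually_ne hfx0] with n hn
  rw [Pi.div_apply, hFξ, mul_div_assoc, mul_div_cancel_left₀ _ hn]

end Calculus

theorem TendstoUniformlyOn.exists_eventually_abs_le {α ι : Type*} [TopologicalSpace α]
    {l : Filter ι} {K : Set α} {k : ι → α → ℝ} {h : α → ℝ} (hk : TendstoUniformlyOn k h l K)
    (hK : IsCompact K) (hh : ContinuousOn h K) : ∃ C, ∀ᶠ n in l, ∀ x ∈ K, |k n x| ≤ C := by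
  obtain ⟨C, hC⟩ := hK.exists_bound_of_continuousOn hh
  refine ⟨C + 1, ?_⟩
  filter_upwards [Metric.tendstoUniformlyOn_iff.1 hk 1 one_pos] with n hn x hx
  have := abs_sub_abs_le_abs_sub (k n x) (h x)
  rw [abs_sub_comm, ← Real.dist_eq] at this
  linarith [hn x hx, hC x hx, Real.norm_eq_abs (h x)]

theorem Monotone.integrableOn_Ioo {Q : ℝ → ℝ} (hQ : Monotone Q) (c d : ℝ) :
    IntegrableOn Q (Ioo c d) :=
  ((hQ.monotoneOn _).integrableOn_isCompact isCompact_Icc).mono_set Ioo_subset_Icc_self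

theorem Monotone.setIntegral_Ioo_shift_sub_le {Q : ℝ → ℝ} (hQ : Monotone Q) {c d δ : ℝ}
    (hcd : c ≤ d) (hδ : 0 ≤ δ) :
    ∫ s in Ioo c d, (Q (s + δ) - Q (s - δ)) ≤ 2 * δ * (Q (d + δ) - Q (c - δ)) := by
  have hi : ∀ u v, IntervalIntegrable Q volume u v := fun _ _ => hQ.intervalIntegrable
  have hQr : Monotone fun s => Q (s + δ) := fun _ _ h => hQ (by linarith)
  have hQl : Monotone fun s => Q (s - δ) := fun _ _ h => hQ (by linarith)
  rw [← integral_Ioc_eq_integral_Ioo, ← intervalIntegral.integral_of_le hcd,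
    intervalIntegral.integral_sub hQr.intervalIntegrable hQl.intervalIntegrable,
    intervalIntegral.integral_comp_add_right, intervalIntegral.integral_comp_sub_right,
    intervalIntegral.integral_interval_sub_interval_comm' (hi _ _) (hi _ _) (hi _ _)]
  have hup : ∫ s in d - δ..d + δ, Q s ≤ ∫ _ in d - δ..d + δ, Q (d + δ) :=
    intervalIntegral.integral_mono_on (by linarith) (hi _ _) intervalIntegrable_const
      fun s hs => hQ hs.2
  have hlow : ∫ _ in c - δ..c + δ, Q (c - δ) ≤ ∫ s in c - δ..c + δ, Q s :=
    intervalIntegral.integral_mono_on (by linarith) intervalIntegrable_const (hi _ _)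
      fun s hs => hQ hs.1
  simp only [intervalIntegral.integral_const, smul_eq_mul] at hup hlow
  linarith

theorem setIntegral_abs_sub_le_of_mem_Icc_shift {Q₁ Q₂ : ℝ → ℝ} (h₁ : Monotone Q₁)
    (h₂ : Monotone Q₂) {c d δ : ℝ} (hcd : c ≤ d) (hδ : 0 ≤ δ)
    (hQ : ∀ s ∈ Ioo c d, Q₁ s ∈ Icc (Q₂ (s - δ)) (Q₂ (s + δ))) :
    ∫ s in Ioo c d, |Q₁ s - Q₂ s| ≤ 2 * δ * (Q₂ (d + δ) - Q₂ (c - δ)) := by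
  have hr : Monotone fun s => Q₂ (s + δ) := fun _ _ h => h₂ (by linarith)
  have hl : Monotone fun s => Q₂ (s - δ) := fun _ _ h => h₂ (by linarith)
  refine (setIntegral_mono_on ((h₁.integrableOn_Ioo c d).sub (h₂.integrableOn_Ioo c d)).abs
    ((hr.integrableOn_Ioo c d).sub (hl.integrableOn_Ioo c d)) measurableSet_Ioo
    fun s hs => ?_).trans (h₂.setIntegral_Ioo_shift_sub_le hcd hδ)
  have h₂s : Q₂ (s - δ) ≤ Q₂ s ∧ Q₂ s ≤ Q₂ (s + δ) := ⟨h₂ (by linarith), h₂ (by linarith)⟩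
  simp only [Pi.sub_apply]
  rw [abs_le]
  constructor <;> linarith [(hQ s hs).1, (hQ s hs).2]

theorem tendsto_nhds_zero_of_eventually_le_add {ι κ : Type*} {l : Filter ι} {l' : Filter κ}
    [l'.NeBot] {u : ι → ℝ} {v : κ → ι → ℝ} {w : κ → ℝ} (hu : ∀ i, 0 ≤ u i)
    (hw : Tendsto w l' (𝓝 0))
    (huv : ∀ᶠ k in l', Tendsto (v k) l (𝓝 0) ∧ ∀ᶠ i in l, u i ≤ v k i + w k) :
    Tendsto u l (𝓝 0) := by
  refine tendsto_order.2 ⟨fun e he => Eventually.of_forall fun i => he.trans_le (hu i),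
    fun e he => ?_⟩
  obtain ⟨k, ⟨hv, hle⟩, hwk⟩ := (huv.and (hw.eventually_lt_const (half_pos he))).exists
  filter_upwards [hv.eventually_lt_const (half_pos he), hle] with i hvi hi
  linarith

theorem integrableOn_of_tendsto_of_integral_abs_le {S : Set ℝ} (hS : MeasurableSet S)
    {G : ℕ → ℝ → ℝ} {g : ℝ → ℝ} (hG : ∀ n, IntegrableOn (G n) S)
    (hGg : ∀ s ∈ S, Tendsto (G · s) atTop (𝓝 (g s))) {M : ℝ}
    (hM : ∀ᶠ n in atTop, ∫ s in S, |G n s| ≤ M) : IntegrableOn g S := by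
  refine integrable_of_tendsto ((ae_restrict_iff' hS).2 (Eventually.of_forall hGg))
    (fun n => (hG n).aestronglyMeasurable) (ne_top_of_le_ne_top (ENNReal.ofReal_ne_top (r := M))
      (liminf_le_of_frequently_le' (hM.mono fun n hn => ?_).frequently))
  rw [← ofReal_integral_norm_eq_lintegral_enorm (hG n)]
  exact ENNReal.ofReal_le_ofReal hn

theorem IntegrableOn.tendsto_setIntegral_of_subset {S : Set ℝ} {g : ℝ → ℝ}
    (hg : IntegrableOn g S) {κ : Type*} {l : Filter κ} {T : κ → Set ℝ}
    (hTS : ∀ᶠ k in l, T k ⊆ S) (hT : Tendsto (fun k => volume (T k)) l (𝓝 0)) :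
    Tendsto (fun k => ∫ s in T k, g s) l (𝓝 0) := by
  refine (Integrable.tendsto_setIntegral_nhds_zero hg (s := T)
    (tendsto_of_tendsto_of_tendsto_of_le_of_le tendsto_const_nhds hT (fun _ => zero_le)
      fun k => Measure.restrict_le_self _)).congr' ?_
  filter_upwards [hTS] with k hk
  rw [Measure.restrict_restrict_of_subset hk]

theorem setIntegral_Ioo_zero_one_eq_add {φ : ℝ → ℝ} (hφ : IntegrableOn φ (Ioo 0 1)) {η : ℝ}
    (hη : 0 < η) (hη' : η ≤ 1 / 2) :
    ∫ s in Ioo 0 1, φ s =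
      (∫ s in Ioo 0 η, φ s) + (∫ s in Icc η (1 - η), φ s) + ∫ s in Ioo (1 - η) 1, φ s := by
  have h₁ : Ioo 0 η ∪ Icc η (1 - η) = Ioc 0 (1 - η) := Ioo_union_Icc_eq_Ioc hη (by linarith)
  have h₂ : Ioc 0 (1 - η) ∪ Ioo (1 - η) 1 = Ioo 0 1 :=
    Ioc_union_Ioo_eq_Ioo (by linarith) (by linarith)
  have hsub₁ : Ioc 0 (1 - η) ⊆ Ioo 0 1 := h₂ ▸ subset_union_left
  rw [← h₂, setIntegral_union (disjoint_left.2 fun s h h' => h'.1.not_ge h.2) measurableSet_Ioo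
      (hφ.mono_set hsub₁) (hφ.mono_set (h₂ ▸ subset_union_right)),
    ← h₁, setIntegral_union (disjoint_left.2 fun s h h' => h.2.not_ge h'.1) measurableSet_Icc
      (hφ.mono_set (h₁ ▸ hsub₁ |>.trans' subset_union_left))
      (hφ.mono_set (h₁ ▸ hsub₁ |>.trans' subset_union_right))]

theorem tendsto_setIntegral_abs_sub_of_forall_abs_le {S : Set ℝ} (hS : MeasurableSet S)
    (hSfin : volume S ≠ ⊤) {G : ℕ → ℝ → ℝ} {g : ℝ → ℝ}
    (hG : ∀ n, AEStronglyMeasurable (G n) (volume.restrict S))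
    (hGg : ∀ s ∈ S, Tendsto (G · s) atTop (𝓝 (g s))) {C : ℝ}
    (hC : ∀ᶠ n in atTop, ∀ s ∈ S, |G n s| ≤ C) :
    Tendsto (fun n => ∫ s in S, |G n s - g s|) atTop (𝓝 0) := by
  have hGg' : ∀ᵐ s ∂volume.restrict S, Tendsto (G · s) atTop (𝓝 (g s)) :=
    (ae_restrict_iff' hS).2 (Eventually.of_forall hGg)
  have hg : AEStronglyMeasurable g (volume.restrict S) :=
    aestronglyMeasurable_of_tendsto_ae _ hG hGg'
  have hgC : ∀ s ∈ S, |g s| ≤ C := fun s hs =>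
    le_of_tendsto (hGg s hs).abs (hC.mono fun n hn => hn s hs)
  simpa using tendsto_integral_filter_of_dominated_convergence
    (F := fun n s => |G n s - g s|) (f := fun _ => 0) (fun _ => C + C)
    (Eventually.of_forall fun n => ((hG n).sub hg).norm)
    (hC.mono fun n hn => (ae_restrict_iff' hS).2 (Eventually.of_forall fun s hs => by
      rw [Real.norm_eq_abs, abs_abs]
      exact (abs_sub _ _).trans (add_le_add (hn s hs) (hgC s hs))))
    (integrableOn_const hSfin)
    (hGg'.mono fun s hs => by simpa using (hs.sub_const (g s)).abs)

theorem setIntegral_abs_sub_le_add {T : Set ℝ} {φ ψ : ℝ → ℝ} (hφ : IntegrableOn φ T)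
    (hψ : IntegrableOn ψ T) :
    ∫ s in T, |φ s - ψ s| ≤ (∫ s in T, |φ s|) + ∫ s in T, |ψ s| := by
  rw [← integral_add hφ.abs hψ.abs]
  exact integral_mono (hφ.sub hψ).abs (hφ.abs.add hψ.abs) fun s => abs_sub _ _

theorem tendsto_setIntegral_Ioo_abs_sub {G : ℕ → ℝ → ℝ} {g : ℝ → ℝ}
    (hG : ∀ n, IntegrableOn (G n) (Ioo 0 1))
    (hGg : ∀ s ∈ Ioo 0 1, Tendsto (G · s) atTop (𝓝 (g s)))
    (hbdd : ∀ η ∈ Ioo (0 : ℝ) (1 / 2), ∃ C, ∀ᶠ n in atTop, ∀ s ∈ Icc η (1 - η), |G n s| ≤ C)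
    {w : ℝ → ℝ} (hw : Tendsto w (𝓝[>] 0) (𝓝 0))
    (htail : ∀ η ∈ Ioo (0 : ℝ) (1 / 2), ∀ᶠ n in atTop,
      (∫ s in Ioo 0 η, |G n s|) + ∫ s in Ioo (1 - η) 1, |G n s| ≤ w η) :
    Tendsto (fun n => ∫ s in Ioo 0 1, |G n s - g s|) atTop (𝓝 0) := by
  have hmid : ∀ η : ℝ, 0 < η → Icc η (1 - η) ⊆ Ioo 0 1 := fun η hη s hs =>
    ⟨hη.trans_le hs.1, hs.2.trans_lt (by linarith)⟩
  have hg : IntegrableOn g (Ioo 0 1) := by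
    obtain ⟨C, hC⟩ := hbdd (1 / 4) ⟨by norm_num, by norm_num⟩
    refine integrableOn_of_tendsto_of_integral_abs_le measurableSet_Ioo hG hGg
      (M := w (1 / 4) + C * volume.real (Icc (1 / 4 : ℝ) (1 - 1 / 4))) ?_
    filter_upwards [hC, htail (1 / 4) ⟨by norm_num, by norm_num⟩] with n hCn htn
    have hmidn := (Real.le_norm_self _).trans (norm_setIntegral_le_of_norm_le_const
      (measure_Icc_lt_top (μ := volume)) fun s hs => (abs_abs (G n s)).trans_le (hCn s hs))
    rw [setIntegral_Ioo_zero_one_eq_add (η := 1 / 4) (hG n).abs (by norm_num) (by norm_num)]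
    linarith
  have htail_g : Tendsto (fun η => (∫ s in Ioo 0 η, |g s|) + ∫ s in Ioo (1 - η) 1, |g s|)
      (𝓝[>] 0) (𝓝 0) := by
    have hvol : Tendsto (fun η => ENNReal.ofReal η) (𝓝[>] 0) (𝓝 0) :=
      ENNReal.ofReal_zero ▸ ENNReal.tendsto_ofReal nhdsWithin_le_nhds
    have hsmall : ∀ᶠ η in 𝓝[>] (0 : ℝ), η ∈ Ioo 0 1 := Ioo_mem_nhdsGT one_pos
    simpa using (IntegrableOn.tendsto_setIntegral_of_subset hg.abs
      (hsmall.mono fun η hη => Ioo_subset_Ioo_right hη.2.le) (by simpa using hvol)).add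
      (IntegrableOn.tendsto_setIntegral_of_subset hg.abs
        (hsmall.mono fun η hη => Ioo_subset_Ioo_left (by linarith [hη.2])) (by simpa using hvol))
  refine tendsto_nhds_zero_of_eventually_le_add
    (v := fun η n => ∫ s in Icc η (1 - η), |G n s - g s|)
    (fun n => setIntegral_nonneg measurableSet_Ioo fun _ _ => abs_nonneg _)
    (by simpa only [add_zero] using hw.add htail_g) ?_
  filter_upwards [Ioo_mem_nhdsGT (by norm_num : (0 : ℝ) < 1 / 2)] with η hη
  obtain ⟨C, hC⟩ := hbdd η hη
  refine ⟨tendsto_setIntegral_abs_sub_of_forall_abs_le measurableSet_Icc measure_Icc_lt_top.ne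
    (fun n => ((hG n).mono_set (hmid η hη.1)).aestronglyMeasurable)
    (fun s hs => hGg s (hmid η hη.1 hs)) hC, ?_⟩
  filter_upwards [htail η hη] with n hn
  have hleft : Ioo 0 η ⊆ Ioo 0 1 := Ioo_subset_Ioo_right (by linarith [hη.2])
  have hright : Ioo (1 - η) 1 ⊆ Ioo 0 1 := Ioo_subset_Ioo_left (by linarith [hη.2])
  rw [setIntegral_Ioo_zero_one_eq_add (φ := fun s => |G n s - g s|) ((hG n).sub hg).abs hη.1
    hη.2.le]
  linarith [setIntegral_abs_sub_le_add ((hG n).mono_set hleft) (hg.mono_set hleft),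
    setIntegral_abs_sub_le_add ((hG n).mono_set hright) (hg.mono_set hright)]

section Perturbation

variable {a b : ℝ} {F h : ℝ → ℝ}

theorem abs_apply_quantile_add_sub_le (hab : a ≤ b) (hFc : ContinuousOn F (Icc a b))
    (hh : ContinuousOn h (Icc a b)) {t : ℝ} {k : ℝ → ℝ} (hGa : F a + t * k a = 0)
    (hGb : F b + t * k b = 1)
    (hGrc : ∀ x ∈ Ico a b, ContinuousWithinAt (fun y => F y + t * k y) (Ici x) x) {s : ℝ}
    (hs : s ∈ Ioo 0 1) {e : ℝ} (he : ∀ x ∈ Icc a b, |k x - h x| ≤ e) :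
    |F (quantile a b (fun y => F y + t * k y) s) + t * h (quantile a b (fun y => F y + t * k y) s)
      - s| ≤ |t| * e := by
  refine abs_apply_quantile_sub_le hab (hGa ▸ hs.1) hs.2.le hGb.ge hGrc
    (φ := fun y => F y + t * h y) (hFc.add (continuousOn_const.mul hh)) fun x hx => ?_
  rw [add_sub_add_left_eq_sub, ← mul_sub, abs_mul]
  exact mul_le_mul_of_nonneg_left (he x hx) (abs_nonneg t)

theorem quantile_add_mem_Icc (hab : a ≤ b) (hFc : ContinuousOn F (Icc a b))
    (hFs : StrictMonoOn F (Icc a b)) (hFb : F b = 1) {t : ℝ} {k : ℝ → ℝ}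
    (hGa : F a + t * k a = 0) (hGb : F b + t * k b = 1)
    (hGrc : ∀ x ∈ Ico a b, ContinuousWithinAt (fun y => F y + t * k y) (Ici x) x) {s : ℝ}
    (hs : s ∈ Ioo 0 1) {C : ℝ} (hC : ∀ x ∈ Icc a b, |k x| ≤ C) :
    quantile a b (fun y => F y + t * k y) s ∈
      Icc (quantile a b F (s - |t| * C)) (quantile a b F (s + |t| * C)) := by
  refine mem_Icc_quantile_of_abs_sub_le hab hFs hFb (quantile_mem_Icc hab hGb.ge) ?_
  simpa using abs_apply_quantile_add_sub_le hab hFc continuousOn_const hGa hGb hGrc hs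
    (h := 0) (by simpa using hC)

theorem setIntegral_abs_quantile_add_sub_div_le (hab : a ≤ b) (hFc : ContinuousOn F (Icc a b))
    (hFs : StrictMonoOn F (Icc a b)) (hFb : F b = 1) {t : ℝ} {k : ℝ → ℝ} (ht0 : t ≠ 0)
    (hGa : F a + t * k a = 0) (hGb : F b + t * k b = 1)
    (hGrc : ∀ x ∈ Ico a b, ContinuousWithinAt (fun y => F y + t * k y) (Ici x) x) {C : ℝ}
    (hC : ∀ x ∈ Icc a b, |k x| ≤ C) {c d : ℝ} (hc : 0 ≤ c) (hcd : c ≤ d) (hd : d ≤ 1) :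
    ∫ s in Ioo c d, |(quantile a b (fun y => F y + t * k y) s - quantile a b F s) / t| ≤
      2 * C * (quantile a b F (d + |t| * C) - quantile a b F (c - |t| * C)) := by
  have hC0 : 0 ≤ C := (abs_nonneg _).trans (hC a ⟨le_rfl, hab⟩)
  have := setIntegral_abs_sub_le_of_mem_Icc_shift (monotone_quantile hab hGb.ge)
    (monotone_quantile hab hFb.ge) hcd (by positivity) fun s hs =>
      quantile_add_mem_Icc hab hFc hFs hFb hGa hGb hGrc ⟨hc.trans_lt hs.1, hs.2.trans_le hd⟩ hC
  simp_rw [abs_div]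
  rw [integral_div, div_le_iff₀ (abs_pos.2 ht0)]
  linarith

end Perturbation

section Sequence

variable {a b : ℝ} {F f h : ℝ → ℝ} {k : ℕ → ℝ → ℝ} {t : ℕ → ℝ}

theorem tendsto_quantile_add (hab : a ≤ b) (hFc : ContinuousOn F (Icc a b))
    (hFs : StrictMonoOn F (Icc a b)) (hFb : F b = 1) (ht : Tendsto t atTop (𝓝 0))
    (hGa : ∀ n, F a + t n * k n a = 0) (hGb : ∀ n, F b + t n * k n b = 1)
    (hGrc : ∀ n, ∀ x ∈ Ico a b, ContinuousWithinAt (fun y => F y + t n * k n y) (Ici x) x)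
    {C : ℝ} (hC : ∀ᶠ n in atTop, ∀ x ∈ Icc a b, |k n x| ≤ C) {s : ℝ} (hs : s ∈ Ioo 0 1) :
    Tendsto (fun n => quantile a b (fun y => F y + t n * k n y) s) atTop
      (𝓝 (quantile a b F s)) := by
  have hQ := (continuous_quantile hab hFs hFb).tendsto s
  have hδ : Tendsto (fun n => |t n| * C) atTop (𝓝 0) := by simpa using ht.abs.mul_const C
  have hsand := hC.mono fun n hn =>
    quantile_add_mem_Icc hab hFc hFs hFb (hGa n) (hGb n) (hGrc n) hs hn
  refine tendsto_of_tendsto_of_tendsto_of_le_of_le' ?_ ?_ (hsand.mono fun n hn => hn.1)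
    (hsand.mono fun n hn => hn.2)
  · exact hQ.comp (by simpa using (tendsto_const_nhds (x := s)).sub hδ)
  · exact hQ.comp (by simpa using (tendsto_const_nhds (x := s)).add hδ)

theorem tendsto_quantile_add_sub_div (hab : a ≤ b)
    (hF : ∀ x ∈ Icc a b, HasDerivWithinAt F (f x) (Icc a b) x)
    (hFs : StrictMonoOn F (Icc a b)) (hFa : F a = 0) (hFb : F b = 1)
    (hfc : ContinuousOn f (Icc a b)) (hfpos : ∀ x ∈ Ioo a b, 0 < f x)
    (hh : ContinuousOn h (Icc a b)) (hk : TendstoUniformlyOn k h atTop (Icc a b))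
    (ht0 : ∀ n, t n ≠ 0) (ht : Tendsto t atTop (𝓝 0))
    (hGa : ∀ n, F a + t n * k n a = 0) (hGb : ∀ n, F b + t n * k n b = 1)
    (hGrc : ∀ n, ∀ x ∈ Ico a b, ContinuousWithinAt (fun y => F y + t n * k n y) (Ici x) x)
    {s : ℝ} (hs : s ∈ Ioo 0 1) :
    Tendsto (fun n => (quantile a b (fun y => F y + t n * k n y) s - quantile a b F s) / t n)
      atTop (𝓝 (-(h (quantile a b F s) / f (quantile a b F s)))) := by
  have hFc : ContinuousOn F (Icc a b) := fun x hx => (hF x hx).continuousWithinAt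
  set x := quantile a b F s
  set q : ℕ → ℝ := fun n => quantile a b (fun y => F y + t n * k n y) s
  have hx : x ∈ Ioo a b := quantile_mem_Ioo hab hFc hFs hFa hFb hs
  have hq : ∀ n, q n ∈ Icc a b := fun n => quantile_mem_Icc hab (hGb n).ge
  obtain ⟨C, hC⟩ := hk.exists_eventually_abs_le isCompact_Icc hh
  have hqx : Tendsto q atTop (𝓝 x) := tendsto_quantile_add hab hFc hFs hFb ht hGa hGb hGrc hC hs
  have hFq : Tendsto (fun n => (F (q n) - F x) / t n) atTop (𝓝 (-h x)) := by
    have hr : Tendsto (fun n => (F (q n) + t n * h (q n) - s) / t n) atTop (𝓝 0) := by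
      refine NormedAddGroup.tendsto_nhds_zero.2 fun ε hε => ?_
      filter_upwards [Metric.tendstoUniformlyOn_iff.1 hk (ε / 2) (half_pos hε)] with n hn
      have := abs_apply_quantile_add_sub_le hab hFc hh (hGa n) (hGb n) (hGrc n) hs (e := ε / 2)
        fun y hy => by rw [abs_sub_comm, ← Real.dist_eq]; exact (hn y hy).le
      rw [Real.norm_eq_abs, abs_div, div_lt_iff₀ (abs_pos.2 (ht0 n))]
      nlinarith [abs_pos.2 (ht0 n)]
    have hhq : Tendsto (fun n => h (q n)) atTop (𝓝 (h x)) :=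
      (hh.continuousAt (Icc_mem_nhds hx.1 hx.2)).tendsto.comp hqx
    rw [apply_quantile hab hFc hFs hFa hFb (Ioo_subset_Icc_self hs)]
    refine ((hr.sub hhq).congr fun n => ?_).trans (by rw [zero_sub])
    field_simp [ht0 n]
    ring
  simpa [neg_div] using tendsto_sub_div_of_tendsto_apply_sub_div hF (Ioo_subset_Icc_self hx)
    (hfc x (Ioo_subset_Icc_self hx)) (hfpos x hx).ne' hq hqx hFq

theorem eventually_abs_quantile_add_sub_div_le (hab : a ≤ b)
    (hF : ∀ x ∈ Icc a b, HasDerivWithinAt F (f x) (Icc a b) x)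
    (hFs : StrictMonoOn F (Icc a b)) (hFa : F a = 0) (hFb : F b = 1)
    (hfc : ContinuousOn f (Icc a b)) (hfpos : ∀ x ∈ Ioo a b, 0 < f x)
    (ht : Tendsto t atTop (𝓝 0)) (hGa : ∀ n, F a + t n * k n a = 0)
    (hGb : ∀ n, F b + t n * k n b = 1)
    (hGrc : ∀ n, ∀ x ∈ Ico a b, ContinuousWithinAt (fun y => F y + t n * k n y) (Ici x) x)
    {C : ℝ} (hC : ∀ᶠ n in atTop, ∀ x ∈ Icc a b, |k n x| ≤ C) {η : ℝ}
    (hη : η ∈ Ioo (0 : ℝ) (1 / 2)) :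
    ∃ M, ∀ᶠ n in atTop, ∀ s ∈ Icc η (1 - η),
      |(quantile a b (fun y => F y + t n * k n y) s - quantile a b F s) / t n| ≤ M := by
  have hFc : ContinuousOn F (Icc a b) := fun x hx => (hF x hx).continuousWithinAt
  have hQ := monotone_quantile hab hFb.ge
  set K := Icc (quantile a b F (η / 2)) (quantile a b F (1 - η / 2))
  have hK : K ⊆ Ioo a b := Icc_subset_Ioo
    (quantile_mem_Ioo hab hFc hFs hFa hFb ⟨by linarith [hη.1], by linarith [hη.2]⟩).1
    (quantile_mem_Ioo hab hFc hFs hFa hFb ⟨by linarith [hη.2], by linarith [hη.1]⟩).2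
  obtain ⟨m, hm0, hm⟩ := isCompact_Icc.exists_forall_le'
    (hfc.mono (hK.trans Ioo_subset_Icc_self)) fun y hy => hfpos y (hK hy)
  refine ⟨C / m, ?_⟩
  filter_upwards [hC, (by simpa using ht.abs.mul_const C : Tendsto (fun n => |t n| * C) atTop
    (𝓝 0)).eventually_le_const (half_pos hη.1)] with n hn hδ s hs
  have hs01 : s ∈ Ioo 0 1 := ⟨hη.1.trans_le hs.1, hs.2.trans_lt (by linarith [hη.1])⟩
  have hqs := quantile_add_mem_Icc hab hFc hFs hFb (hGa n) (hGb n) (hGrc n) hs01 hn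
  have hqK : quantile a b (fun y => F y + t n * k n y) s ∈ K :=
    ⟨(hQ (by linarith [hs.1])).trans hqs.1, hqs.2.trans (hQ (by linarith [hs.2]))⟩
  have hxK : quantile a b F s ∈ K :=
    ⟨hQ (by linarith [hs.1, hη.1]), hQ (by linarith [hs.2, hη.1])⟩
  have hLip := mul_abs_sub_le_abs_apply_sub hF (Ioo_subset_Icc_self (hK hxK))
    (Ioo_subset_Icc_self (hK hqK)) hm0.le fun z hz => hm z (uIcc_subset_Icc hxK hqK hz)
  have hFq := abs_apply_quantile_add_sub_le hab hFc continuousOn_const (hGa n) (hGb n)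
    (hGrc n) hs01 (h := 0) (by simpa using hn)
  rw [apply_quantile hab hFc hFs hFa hFb (Ioo_subset_Icc_self hs01)] at hLip
  simp only [Pi.zero_apply, mul_zero, add_zero] at hFq
  have hC0 : 0 ≤ C := (abs_nonneg _).trans (hn a ⟨le_rfl, hab⟩)
  rw [abs_div]
  refine div_le_of_le_mul₀ (abs_nonneg _) (div_nonneg hC0 hm0.le) ?_
  rw [div_mul_eq_mul_div, le_div_iff₀ hm0]
  linarith

theorem eventually_setIntegral_tails_le (hab : a ≤ b) (hFc : ContinuousOn F (Icc a b))
    (hFs : StrictMonoOn F (Icc a b)) (hFa : F a = 0) (hFb : F b = 1)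
    (ht0 : ∀ n, t n ≠ 0) (ht : Tendsto t atTop (𝓝 0))
    (hGa : ∀ n, F a + t n * k n a = 0) (hGb : ∀ n, F b + t n * k n b = 1)
    (hGrc : ∀ n, ∀ x ∈ Ico a b, ContinuousWithinAt (fun y => F y + t n * k n y) (Ici x) x)
    {C : ℝ} (hC : ∀ᶠ n in atTop, ∀ x ∈ Icc a b, |k n x| ≤ C) {η : ℝ}
    (hη : η ∈ Ioo (0 : ℝ) (1 / 2)) :
    ∀ᶠ n in atTop,
      (∫ s in Ioo 0 η,
        |(quantile a b (fun y => F y + t n * k n y) s - quantile a b F s) / t n|) +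
      (∫ s in Ioo (1 - η) 1,
        |(quantile a b (fun y => F y + t n * k n y) s - quantile a b F s) / t n|) ≤
      2 * C * ((quantile a b F (2 * η) - a) + (b - quantile a b F (1 - 2 * η))) := by
  have hQ := monotone_quantile hab hFb.ge
  filter_upwards [hC, (by simpa using ht.abs.mul_const C : Tendsto (fun n => |t n| * C) atTop
    (𝓝 0)).eventually_le_const hη.1] with n hn hδ
  have hC0 : 0 ≤ C := (abs_nonneg _).trans (hn a ⟨le_rfl, hab⟩)
  have hδ0 : 0 ≤ |t n| * C := by positivity
  have hleft := setIntegral_abs_quantile_add_sub_div_le hab hFc hFs hFb (ht0 n) (hGa n) (hGb n)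
    (hGrc n) hn le_rfl hη.1.le (by linarith [hη.2])
  have hright := setIntegral_abs_quantile_add_sub_div_le hab hFc hFs hFb (ht0 n) (hGa n)
    (hGb n) (hGrc n) hn (c := 1 - η) (d := 1) (by linarith [hη.2]) (by linarith [hη.1]) le_rfl
  rw [quantile_of_nonpos hab hFs hFa hFb (s := 0 - |t n| * C) (by linarith)] at hleft
  rw [quantile_of_one_le hab hFs hFb (s := 1 + |t n| * C) (by linarith)] at hright
  have h₁ : quantile a b F (η + |t n| * C) ≤ quantile a b F (2 * η) := hQ (by linarith)
  have h₂ : quantile a b F (1 - 2 * η) ≤ quantile a b F (1 - η - |t n| * C) := hQ (by linarith)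
  nlinarith [mul_le_mul_of_nonneg_left h₁ hC0, mul_le_mul_of_nonneg_left h₂ hC0]

theorem tendsto_quantile_tails (hab : a ≤ b) (hFs : StrictMonoOn F (Icc a b)) (hFa : F a = 0)
    (hFb : F b = 1) :
    Tendsto (fun η => (quantile a b F (2 * η) - a) + (b - quantile a b F (1 - 2 * η))) (𝓝 0)
      (𝓝 0) := by
  have hQ := continuous_quantile hab hFs hFb
  have : Continuous fun η => (quantile a b F (2 * η) - a) + (b - quantile a b F (1 - 2 * η)) := by
    fun_prop
  simpa [quantile_of_nonpos hab hFs hFa hFb le_rfl, quantile_of_one_le hab hFs hFb le_rfl]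
    using this.tendsto 0

end Sequence

theorem stmt16_general (a b : ℝ) (hab : a < b) (F f : ℝ → ℝ)
    (hFa : F a = 0) (hFb : F b = 1)
    (hfcont : ContinuousOn f (Set.Icc a b))
    (hFderiv : ∀ x ∈ Set.Icc a b, HasDerivWithinAt F (f x) (Set.Icc a b) x)
    (hfpos : ∀ x ∈ Set.Ioo a b, 0 < f x)
    (h : ℝ → ℝ) (hhcont : ContinuousOn h (Set.Icc a b))
    (hn : ℕ → ℝ → ℝ)
    (hunif : TendstoUniformlyOn hn h atTop (Set.Icc a b))
    (tn : ℕ → ℝ) (htn0 : ∀ n, tn n ≠ 0) (htn : Tendsto tn atTop (nhds 0))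
    (hdf : ∀ n, MonotoneOn (fun x => F x + tn n * hn n x) (Set.Icc a b)
      ∧ F a + tn n * hn n a = 0 ∧ F b + tn n * hn n b = 1
      ∧ ∀ x ∈ Set.Ico a b,
          ContinuousWithinAt (fun y => F y + tn n * hn n y) (Set.Ici x) x) :
    Tendsto (fun n => ∫ s in Set.Ioo (0 : ℝ) 1,
        |(sInf {x | x ∈ Set.Icc a b ∧ s ≤ F x + tn n * hn n x}
            - sInf {x | x ∈ Set.Icc a b ∧ s ≤ F x}) / tn n
          - (-(h (sInf {x | x ∈ Set.Icc a b ∧ s ≤ F x})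
              / f (sInf {x | x ∈ Set.Icc a b ∧ s ≤ F x})))|)
      atTop (nhds 0) := by
  have hFc : ContinuousOn F (Icc a b) := fun x hx => (hFderiv x hx).continuousWithinAt
  have hFs : StrictMonoOn F (Icc a b) :=
    strictMonoOn_of_hasDerivWithinAt_pos (convex_Icc a b) hFc
      (fun x hx => (hFderiv x (interior_subset hx)).mono interior_subset)
      fun x hx => hfpos x (by rwa [interior_Icc] at hx)
  have hGa := fun n => (hdf n).2.1
  have hGb := fun n => (hdf n).2.2.1
  have hGrc := fun n => (hdf n).2.2.2
  obtain ⟨C, hC⟩ := hunif.exists_eventually_abs_le isCompact_Icc hhcont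
  have hw := ((tendsto_quantile_tails hab.le hFs hFa hFb).const_mul (2 * C)).mono_left
    (nhdsWithin_le_nhds (s := Ioi 0))
  rw [mul_zero] at hw
  refine (tendsto_setIntegral_Ioo_abs_sub
    (fun n => (((monotone_quantile hab.le (hGb n).ge).integrableOn_Ioo 0 1).sub
      ((monotone_quantile hab.le hFb.ge).integrableOn_Ioo 0 1)).div_const (tn n))
    (fun s hs => tendsto_quantile_add_sub_div hab.le hFderiv hFs hFa hFb hfcont hfpos hhcont
      hunif htn0 htn hGa hGb hGrc hs)
    (fun η hη => eventually_abs_quantile_add_sub_div_le hab.le hFderiv hFs hFa hFb hfcont hfpos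
      htn hGa hGb hGrc hC hη)
    hw
    fun η hη => eventually_setIntegral_tails_le hab.le hFc hFs hFa hFb htn0 htn hGa hGb hGrc hC
      hη).congr fun n => setIntegral_congr_fun measurableSet_Ioo fun s hs => ?_
  simp only [quantile, Pi.sub_apply, min_eq_right hs.2.le]

/-- Hadamard differentiability of the inversion functional `F ↦ F⁻¹` into `L¹(0,1)`:
if `F` is a continuously differentiable distribution function on `[a,b]` of a measure
concentrated on `(a,b]` with derivative `f > 0` on `(a,b)`, `hₙ → h` uniformly on `[a,b]`
with `h` continuous, `tₙ → 0`, `tₙ ≠ 0`, and each `F + tₙ hₙ` is again such a distribution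
function, then `((F + tₙ hₙ)⁻¹ - F⁻¹)/tₙ → -(h/f) ∘ F⁻¹` in `L¹(0,1)`. -/
theorem stmt16 (a b : ℝ) (hab : a < b) (F f : ℝ → ℝ)
    (hFmono : MonotoneOn F (Set.Icc a b)) (hFa : F a = 0) (hFb : F b = 1)
    (hFrc : ∀ x ∈ Set.Ico a b, ContinuousWithinAt F (Set.Ici x) x)
    (hfcont : ContinuousOn f (Set.Icc a b))
    (hFderiv : ∀ x ∈ Set.Icc a b, HasDerivWithinAt F (f x) (Set.Icc a b) x)
    (hfpos : ∀ x ∈ Set.Ioo a b, 0 < f x)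
    (h : ℝ → ℝ) (hhcont : ContinuousOn h (Set.Icc a b))
    (hn : ℕ → ℝ → ℝ)
    (hunif : TendstoUniformlyOn hn h atTop (Set.Icc a b))
    (tn : ℕ → ℝ) (htn0 : ∀ n, tn n ≠ 0) (htn : Tendsto tn atTop (nhds 0))
    (hdf : ∀ n, MonotoneOn (fun x => F x + tn n * hn n x) (Set.Icc a b)
      ∧ F a + tn n * hn n a = 0 ∧ F b + tn n * hn n b = 1
      ∧ ∀ x ∈ Set.Ico a b,
          ContinuousWithinAt (fun y => F y + tn n * hn n y) (Set.Ici x) x) :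
    Tendsto (fun n => ∫ s in Set.Ioo (0 : ℝ) 1,
        |(sInf {x | x ∈ Set.Icc a b ∧ s ≤ F x + tn n * hn n x}
            - sInf {x | x ∈ Set.Icc a b ∧ s ≤ F x}) / tn n
          - (-(h (sInf {x | x ∈ Set.Icc a b ∧ s ≤ F x})
              / f (sInf {x | x ∈ Set.Icc a b ∧ s ≤ F x})))|)
      atTop (nhds 0) :=
  stmt16_general a b hab F f hFa hFb hfcont hFderiv hfpos h hhcont hn hunif tn htn0 htn hdf
end
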